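/- arXiv:1604.01350 — 3 statements merged into one kernel-verified Lean document; each statement's English description precedes it below -/
import Mathlib

section
/- Consider a finite MDP with state set S, action set A, reward function R with 0 ≤ R ≤ R_max, and discount factor γ ∈ [0,1). Let n : S × A × S → ℕ be visit counts with n(s,a) ≥ 1 for all (s,a), let h ∈ ℕ, and let M_h(s,a) be the set of h-reachable models at (s,a) under the sample-mean update rule. Suppose Ṽ : S → ℝ satisfies the optimistic Bellman equation Ṽ(s) = max_{a∈A} max_{Q ∈ M_h(s,a)} Σ_{s'∈S} Q(s')·(R(s,a,s') + γ·Ṽ(s')) for all s, and suppose that for some choice of models Q_{s,a} ∈ M_h(s,a) for each (s,a), the function V̂ : S → ℝ satisfies the Bellman optimality equation V̂(s) = max_{a∈A} Σ_{s'∈S} Q_{s,a}(s')·(R(s,a,s') + γ·V̂(s')) for all s. Then Ṽ(s) ≥ V̂(s) for every s ∈ S. (Lemma 1, Optimism, instantiated for the sample-mean estimator: the internal value of Algorithm 1 is at least the h-reachable optimal value.) -/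
open Finset

/-- The set of h-reachable models at (s,a) under the sample-mean update rule:
Q(s') = (n(s,a,s') + m(s'))/(n(s,a) + h) for some allocation m : S → ℕ with ∑ m = h. -/
def reachableModels {S A : Type*} [Fintype S] (n : S → A → S → ℕ) (h : ℕ)
    (s : S) (a : A) : Set (S → ℝ) :=
  {Q | ∃ m : S → ℕ, (∑ s', m s') = h ∧
    ∀ s', Q s' = ((n s a s' : ℝ) + (m s' : ℝ)) / (((∑ s'', n s a s'' : ℕ) : ℝ) + (h : ℝ))}

/-- Lemma 1 (Optimism), instantiated for the sample-mean estimator: if Ṽ satisfies the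
optimistic Bellman equation (maximizing over actions and over h-reachable models) and
V̂ satisfies the Bellman optimality equation for some fixed choice of h-reachable models
Q_{s,a}, then Ṽ ≥ V̂ pointwise. -/
theorem optimism_discrete {S A : Type*} [Fintype S] [Fintype A] [Nonempty S] [Nonempty A]
    (R : S → A → S → ℝ) (R_max : ℝ) (hRmax : 0 < R_max)
    (hR : ∀ s a s', 0 ≤ R s a s' ∧ R s a s' ≤ R_max)
    (γ : ℝ) (hγ : γ ∈ Set.Ico (0 : ℝ) 1)
    (n : S → A → S → ℕ) (hn : ∀ s a, 1 ≤ ∑ s', n s a s') (h : ℕ)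
    (Vtilde : S → ℝ)
    (hopt : ∀ s, IsGreatest
      {x : ℝ | ∃ a : A, ∃ Q ∈ reachableModels n h s a,
        x = ∑ s', Q s' * (R s a s' + γ * Vtilde s')} (Vtilde s))
    (Qsa : S → A → S → ℝ) (hQsa : ∀ s a, Qsa s a ∈ reachableModels n h s a)
    (Vhat : S → ℝ)
    (hbell : ∀ s, Vhat s =
      univ.sup' univ_nonempty (fun a => ∑ s', Qsa s a s' * (R s a s' + γ * Vhat s'))) :
    ∀ s, Vhat s ≤ Vtilde s := by
  obtain ⟨hγ0, hγ1⟩ := hγ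
  -- basic facts about models
  have hQpos : ∀ s a s', 0 ≤ Qsa s a s' := by
    intro s a s'
    obtain ⟨m, hm, hQ⟩ := hQsa s a
    rw [hQ]
    have hden : (0:ℝ) < ((∑ s'', n s a s'' : ℕ) : ℝ) + (h : ℝ) := by
      have := hn s a
      have : (1:ℝ) ≤ ((∑ s'', n s a s'' : ℕ) : ℝ) := by exact_mod_cast this
      positivity
    positivity
  have hQsum : ∀ s a, ∑ s', Qsa s a s' = 1 := by
    intro s a
    obtain ⟨m, hm, hQ⟩ := hQsa s a
    have hden : (0:ℝ) < ((∑ s'', n s a s'' : ℕ) : ℝ) + (h : ℝ) := by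
      have := hn s a
      have : (1:ℝ) ≤ ((∑ s'', n s a s'' : ℕ) : ℝ) := by exact_mod_cast this
      positivity
    have : ∑ s', Qsa s a s'
        = (∑ s', ((n s a s' : ℝ) + (m s' : ℝ))) / (((∑ s'', n s a s'' : ℕ) : ℝ) + (h : ℝ)) := by
      rw [Finset.sum_div]
      exact Finset.sum_congr rfl fun s' _ => hQ s'
    rw [this, Finset.sum_add_distrib]
    have h1 : ∑ s', ((n s a s' : ℕ) : ℝ) = ((∑ s', n s a s' : ℕ) : ℝ) := by
      push_cast; ring
    have h2 : ∑ s', ((m s' : ℕ) : ℝ) = (h : ℝ) := by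
      rw [← hm]; push_cast; ring
    rw [h1, h2]
    exact div_self (ne_of_gt hden)
  set M := univ.sup' univ_nonempty (fun s => Vhat s - Vtilde s) with hM
  have key : ∀ s, Vhat s - Vtilde s ≤ γ * M := by
    intro s
    obtain ⟨a, -, hval⟩ := Finset.exists_mem_eq_sup' (univ_nonempty)
      (fun a => ∑ s', Qsa s a s' * (R s a s' + γ * Vhat s'))
    have hVhat : Vhat s = ∑ s', Qsa s a s' * (R s a s' + γ * Vhat s') := by
      rw [hbell s, hval]
    have hVtilde : ∑ s', Qsa s a s' * (R s a s' + γ * Vtilde s') ≤ Vtilde s :=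
      (hopt s).2 ⟨a, Qsa s a, hQsa s a, rfl⟩
    have hdiff : Vhat s - Vtilde s ≤
        ∑ s', Qsa s a s' * (γ * (Vhat s' - Vtilde s')) := by
      have : ∑ s', Qsa s a s' * (R s a s' + γ * Vhat s')
          - ∑ s', Qsa s a s' * (R s a s' + γ * Vtilde s')
          = ∑ s', Qsa s a s' * (γ * (Vhat s' - Vtilde s')) := by
        rw [← Finset.sum_sub_distrib]
        exact Finset.sum_congr rfl fun s' _ => by ring
      linarith [hVhat ▸ (by linarith : Vhat s - Vtilde s ≤
        ∑ s', Qsa s a s' * (R s a s' + γ * Vhat s')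
        - ∑ s', Qsa s a s' * (R s a s' + γ * Vtilde s')), this]
    calc Vhat s - Vtilde s ≤ ∑ s', Qsa s a s' * (γ * (Vhat s' - Vtilde s')) := hdiff
      _ ≤ ∑ s', Qsa s a s' * (γ * M) := by
          apply Finset.sum_le_sum
          intro s' _
          have hle : Vhat s' - Vtilde s' ≤ M :=
            Finset.le_sup' (fun s => Vhat s - Vtilde s) (Finset.mem_univ s')
          exact mul_le_mul_of_nonneg_left
            (mul_le_mul_of_nonneg_left hle hγ0) (hQpos s a s')
      _ = γ * M := by rw [← Finset.sum_mul, hQsum s a, one_mul]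
  have hM0 : M ≤ 0 := by
    obtain ⟨s₀, -, hs₀⟩ := Finset.exists_mem_eq_sup' (univ_nonempty)
      (fun s => Vhat s - Vtilde s)
    have hMeq : M = Vhat s₀ - Vtilde s₀ := hs₀
    have := key s₀
    nlinarith
  intro s
  have := key s
  nlinarith
end

section
/- Consider a finite state set S, finite action set A, reward function R : S × A × S → ℝ with 0 ≤ R ≤ R_max, and discount factor γ ∈ [0,1). Let P₁ and P₂ be two transition kernels on (S,A), and suppose V₁, V₂ : S → ℝ satisfy the Bellman optimality equations for P₁ and P₂, respectively. Then max_{s∈S} |V₁(s) − V₂(s)| ≤ (R_max/(1−γ)²) · max_{(s,a)} Σ_{s'∈S} |P₁(s'|s,a) − P₂(s'|s,a)|. -/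
open Finset

lemma bellman_bounds {S A : Type*} [Fintype S] [Fintype A] [Nonempty S] [Nonempty A]
    (R : S → A → S → ℝ) (R_max : ℝ)
    (hR : ∀ s a s', 0 ≤ R s a s' ∧ R s a s' ≤ R_max)
    (γ : ℝ) (hγ0 : 0 ≤ γ) (hγ1 : γ < 1)
    (P : S → A → S → ℝ)
    (hP : ∀ s a, (∀ s', 0 ≤ P s a s') ∧ (∑ s', P s a s') = 1)
    (V : S → ℝ)
    (hV : ∀ s, V s =
      univ.sup' univ_nonempty (fun a => ∑ s', P s a s' * (R s a s' + γ * V s'))) :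
    ∀ s, 0 ≤ V s ∧ V s ≤ R_max / (1 - γ) := by
  have h1γ : (0:ℝ) < 1 - γ := by linarith
  obtain ⟨s₀, -, hs₀⟩ := exists_mem_eq_sup' (univ_nonempty (α := S)) V
  have hMle : ∀ s, V s ≤ univ.sup' univ_nonempty V := fun s => le_sup' V (mem_univ s)
  have hstep : ∀ s, V s ≤ R_max + γ * univ.sup' univ_nonempty V := by
    intro s
    rw [hV s]
    apply sup'_le
    intro a _
    calc ∑ s', P s a s' * (R s a s' + γ * V s')
        ≤ ∑ s', P s a s' * (R_max + γ * univ.sup' univ_nonempty V) := by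
          apply Finset.sum_le_sum
          intro s' _
          have h0 := (hP s a).1 s'
          have h1 := (hR s a s').2
          have h2 := hMle s'
          have : R s a s' + γ * V s' ≤ R_max + γ * univ.sup' univ_nonempty V := by nlinarith
          exact mul_le_mul_of_nonneg_left this h0
      _ = R_max + γ * univ.sup' univ_nonempty V := by
          rw [← Finset.sum_mul, (hP s a).2, one_mul]
  have hMbound : univ.sup' univ_nonempty V ≤ R_max + γ * univ.sup' univ_nonempty V := by
    conv_lhs => rw [hs₀]
    exact hstep s₀
  have hMup : univ.sup' univ_nonempty V ≤ R_max / (1 - γ) := by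
    rw [le_div_iff₀ h1γ]; nlinarith
  -- lower bound
  obtain ⟨s₁, -, hs₁⟩ := exists_mem_eq_inf' (univ_nonempty (α := S)) V
  have hmle : ∀ s, univ.inf' univ_nonempty V ≤ V s := fun s => inf'_le V (mem_univ s)
  have hstep' : ∀ s, γ * univ.inf' univ_nonempty V ≤ V s := by
    intro s
    rw [hV s]
    obtain ⟨a⟩ := ‹Nonempty A›
    refine le_trans ?_ (le_sup' (fun a => ∑ s', P s a s' * (R s a s' + γ * V s'))
      (mem_univ a))
    calc γ * univ.inf' univ_nonempty V
        = ∑ s', P s a s' * (γ * univ.inf' univ_nonempty V) := by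
          rw [← Finset.sum_mul, (hP s a).2, one_mul]
      _ ≤ ∑ s', P s a s' * (R s a s' + γ * V s') := by
          apply Finset.sum_le_sum
          intro s' _
          have h0 := (hP s a).1 s'
          have h1 := (hR s a s').1
          have h2 := hmle s'
          have : γ * univ.inf' univ_nonempty V ≤ R s a s' + γ * V s' := by nlinarith
          exact mul_le_mul_of_nonneg_left this h0
  have hmbound : γ * univ.inf' univ_nonempty V ≤ univ.inf' univ_nonempty V := by
    conv_rhs => rw [hs₁]
    exact hstep' s₁
  have hmlow : 0 ≤ univ.inf' univ_nonempty V := by nlinarith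
  exact fun s => ⟨le_trans hmlow (hmle s), le_trans (hMle s) hMup⟩

lemma key_step {S A : Type*} [Fintype S] [Fintype A] [Nonempty S] [Nonempty A]
    (R : S → A → S → ℝ) (R_max : ℝ) (hRmax : 0 < R_max)
    (hR : ∀ s a s', 0 ≤ R s a s' ∧ R s a s' ≤ R_max)
    (γ : ℝ) (hγ0 : 0 ≤ γ) (hγ1 : γ < 1)
    (P₁ P₂ : S → A → S → ℝ)
    (hP₁ : ∀ s a, (∀ s', 0 ≤ P₁ s a s') ∧ (∑ s', P₁ s a s') = 1)
    (hP₂ : ∀ s a, (∀ s', 0 ≤ P₂ s a s') ∧ (∑ s', P₂ s a s') = 1)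
    (V₁ V₂ : S → ℝ)
    (hV₁ : ∀ s, V₁ s =
      univ.sup' univ_nonempty (fun a => ∑ s', P₁ s a s' * (R s a s' + γ * V₁ s')))
    (hV₂ : ∀ s, V₂ s =
      univ.sup' univ_nonempty (fun a => ∑ s', P₂ s a s' * (R s a s' + γ * V₂ s')))
    (Δ ε : ℝ)
    (hΔ : ∀ s, |V₁ s - V₂ s| ≤ Δ)
    (hε : ∀ s a, (∑ s', |P₁ s a s' - P₂ s a s'|) ≤ ε)
    (s : S) :
    V₁ s - V₂ s ≤ (R_max / (1 - γ)) * ε + γ * Δ := by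
  have h1γ : (0:ℝ) < 1 - γ := by linarith
  have hC : (0:ℝ) ≤ R_max / (1 - γ) := div_nonneg hRmax.le h1γ.le
  have hVb := bellman_bounds R R_max hR γ hγ0 hγ1 P₂ hP₂ V₂ hV₂
  obtain ⟨a₀, -, ha₀⟩ := exists_mem_eq_sup' (univ_nonempty (α := A))
    (fun a => ∑ s', P₁ s a s' * (R s a s' + γ * V₁ s'))
  have hV2ge : (∑ s', P₂ s a₀ s' * (R s a₀ s' + γ * V₂ s')) ≤ V₂ s := by
    rw [hV₂ s]
    exact le_sup' (fun a => ∑ s', P₂ s a s' * (R s a s' + γ * V₂ s')) (mem_univ a₀)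
  have hV1eq : V₁ s = ∑ s', P₁ s a₀ s' * (R s a₀ s' + γ * V₁ s') := by
    rw [hV₁ s, ha₀]
  have key : V₁ s - V₂ s ≤
      ∑ s', (P₁ s a₀ s' - P₂ s a₀ s') * (R s a₀ s' + γ * V₂ s')
      + γ * ∑ s', P₁ s a₀ s' * (V₁ s' - V₂ s') := by
    have heq : (∑ s', (P₁ s a₀ s' - P₂ s a₀ s') * (R s a₀ s' + γ * V₂ s'))
        + γ * ∑ s', P₁ s a₀ s' * (V₁ s' - V₂ s')
        = (∑ s', P₁ s a₀ s' * (R s a₀ s' + γ * V₁ s'))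
          - ∑ s', P₂ s a₀ s' * (R s a₀ s' + γ * V₂ s') := by
      rw [Finset.mul_sum, ← Finset.sum_add_distrib, ← Finset.sum_sub_distrib]
      apply Finset.sum_congr rfl
      intro s' _
      ring
    rw [heq, ← hV1eq]
    linarith [hV2ge]
  have t1 : ∑ s', (P₁ s a₀ s' - P₂ s a₀ s') * (R s a₀ s' + γ * V₂ s')
      ≤ (R_max / (1 - γ)) * ε := by
    calc ∑ s', (P₁ s a₀ s' - P₂ s a₀ s') * (R s a₀ s' + γ * V₂ s')
        ≤ ∑ s', |P₁ s a₀ s' - P₂ s a₀ s'| * (R_max / (1 - γ)) := by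
          apply Finset.sum_le_sum
          intro s' _
          have hb := hVb s'
          have h1 := (hR s a₀ s').1
          have h2 := (hR s a₀ s').2
          have habs : P₁ s a₀ s' - P₂ s a₀ s' ≤ |P₁ s a₀ s' - P₂ s a₀ s'| := le_abs_self _
          have hnn : (0:ℝ) ≤ R s a₀ s' + γ * V₂ s' := by nlinarith [hb.1]
          have hup : R s a₀ s' + γ * V₂ s' ≤ R_max / (1 - γ) := by
            have he : R_max + γ * (R_max / (1 - γ)) = R_max / (1 - γ) := by
              field_simp
              ring
            nlinarith [hb.2]
          have h0 : (0:ℝ) ≤ |P₁ s a₀ s' - P₂ s a₀ s'| := abs_nonneg _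
          nlinarith
      _ = (∑ s', |P₁ s a₀ s' - P₂ s a₀ s'|) * (R_max / (1 - γ)) := by
          rw [Finset.sum_mul]
      _ ≤ (R_max / (1 - γ)) * ε := by
          rw [mul_comm]
          exact mul_le_mul_of_nonneg_left (hε s a₀) hC
  have t2 : ∑ s', P₁ s a₀ s' * (V₁ s' - V₂ s') ≤ Δ := by
    calc ∑ s', P₁ s a₀ s' * (V₁ s' - V₂ s')
        ≤ ∑ s', P₁ s a₀ s' * Δ := by
          apply Finset.sum_le_sum
          intro s' _
          have h0 := (hP₁ s a₀).1 s'
          have h2 : V₁ s' - V₂ s' ≤ Δ := le_trans (le_abs_self _) (hΔ s')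
          exact mul_le_mul_of_nonneg_left h2 h0
      _ = Δ := by rw [← Finset.sum_mul, (hP₁ s a₀).2, one_mul]
  nlinarith [key]

/-- Simulation lemma: if V₁ and V₂ satisfy the Bellman optimality equations for transition
kernels P₁ and P₂ respectively (same bounded rewards, discount γ ∈ [0,1)), then the
sup-norm distance between V₁ and V₂ is at most (R_max/(1-γ)²) times the largest L1
distance between the kernels. -/
theorem simulation_lemma {S A : Type*} [Fintype S] [Fintype A] [Nonempty S] [Nonempty A]
    (R : S → A → S → ℝ) (R_max : ℝ) (hRmax : 0 < R_max)
    (hR : ∀ s a s', 0 ≤ R s a s' ∧ R s a s' ≤ R_max)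
    (γ : ℝ) (hγ : γ ∈ Set.Ico (0 : ℝ) 1)
    (P₁ P₂ : S → A → S → ℝ)
    (hP₁ : ∀ s a, (∀ s', 0 ≤ P₁ s a s') ∧ (∑ s', P₁ s a s') = 1)
    (hP₂ : ∀ s a, (∀ s', 0 ≤ P₂ s a s') ∧ (∑ s', P₂ s a s') = 1)
    (V₁ V₂ : S → ℝ)
    (hV₁ : ∀ s, V₁ s =
      univ.sup' univ_nonempty (fun a => ∑ s', P₁ s a s' * (R s a s' + γ * V₁ s')))
    (hV₂ : ∀ s, V₂ s =
      univ.sup' univ_nonempty (fun a => ∑ s', P₂ s a s' * (R s a s' + γ * V₂ s'))) :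
    univ.sup' univ_nonempty (fun s => |V₁ s - V₂ s|) ≤
      (R_max / (1 - γ) ^ 2) *
        univ.sup' univ_nonempty
          (fun p : S × A => ∑ s', |P₁ p.1 p.2 s' - P₂ p.1 p.2 s'|) := by
  obtain ⟨hγ0, hγ1⟩ := hγ
  have h1γ : (0:ℝ) < 1 - γ := by linarith
  set Δ := univ.sup' univ_nonempty (fun s => |V₁ s - V₂ s|) with hΔdef
  set ε := univ.sup' univ_nonempty
    (fun p : S × A => ∑ s', |P₁ p.1 p.2 s' - P₂ p.1 p.2 s'|) with hεdef
  have hΔ : ∀ s, |V₁ s - V₂ s| ≤ Δ :=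
    fun s => le_sup' (fun s => |V₁ s - V₂ s|) (mem_univ s)
  have hΔ' : ∀ s, |V₂ s - V₁ s| ≤ Δ := by
    intro s; rw [abs_sub_comm]; exact hΔ s
  have hε : ∀ s a, (∑ s', |P₁ s a s' - P₂ s a s'|) ≤ ε :=
    fun s a => le_sup' (fun p : S × A => ∑ s', |P₁ p.1 p.2 s' - P₂ p.1 p.2 s'|)
      (mem_univ (s, a))
  have hε' : ∀ s a, (∑ s', |P₂ s a s' - P₁ s a s'|) ≤ ε := by
    intro s a
    simp only [abs_sub_comm (P₂ s a _)]
    exact hε s a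
  obtain ⟨s₀, -, hs₀⟩ := exists_mem_eq_sup' (univ_nonempty (α := S))
    (fun s => |V₁ s - V₂ s|)
  have k1 := key_step R R_max hRmax hR γ hγ0 hγ1 P₁ P₂ hP₁ hP₂ V₁ V₂ hV₁ hV₂ Δ ε hΔ hε s₀
  have k2 := key_step R R_max hRmax hR γ hγ0 hγ1 P₂ P₁ hP₂ hP₁ V₂ V₁ hV₂ hV₁ Δ ε hΔ' hε' s₀
  have hΔb : Δ ≤ (R_max / (1 - γ)) * ε + γ * Δ := by
    conv_lhs => rw [hΔdef, hs₀]
    exact abs_sub_le_iff.mpr ⟨k1, k2⟩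
  have hfin : Δ ≤ (R_max / (1 - γ)) * ε / (1 - γ) := by
    rw [le_div_iff₀ h1γ]; nlinarith
  have heq : (R_max / (1 - γ)) * ε / (1 - γ) = (R_max / (1 - γ) ^ 2) * ε := by
    rw [div_mul_eq_mul_div, div_div, ← sq, div_mul_eq_mul_div]
  linarith [heq ▸ hfin]
end

section
/- Let S, A be nonempty finite sets, let n : S × A × S → ℕ be visit counts with n(s,a) := Σ_{s'} n(s,a,s') ≥ 1, let P̂(s'|s,a) = n(s,a,s')/n(s,a) be the empirical model, and let h ∈ ℕ. Then every h-reachable model Q ∈ M_h(s,a) under the sample-mean update rule satisfies Σ_{s'∈S} |Q(s') − P̂(s'|s,a)| ≤ 2h/(n(s,a) + h). -/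
open Finset

/-- Every h-reachable model is within L1 distance 2h/(n(s,a)+h) of the empirical
(sample-mean) model P̂(s'|s,a) = n(s,a,s')/n(s,a). -/
theorem reachable_model_l1_bound {S A : Type*} [Fintype S] [Fintype A]
    (n : S → A → S → ℕ) (hn : ∀ s a, 1 ≤ ∑ s', n s a s') (h : ℕ)
    (s : S) (a : A) (Q : S → ℝ) (hQ : Q ∈ reachableModels n h s a) :
    ∑ s', |Q s' - (n s a s' : ℝ) / ((∑ s'', n s a s'' : ℕ) : ℝ)| ≤
      2 * (h : ℝ) / (((∑ s'', n s a s'' : ℕ) : ℝ) + (h : ℝ)) := by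
  obtain ⟨m, hm, hQ'⟩ := hQ
  set N : ℝ := ((∑ s'', n s a s'' : ℕ) : ℝ) with hN
  have hNpos : 0 < N := by
    rw [hN]
    exact_mod_cast Nat.lt_of_lt_of_le Nat.zero_lt_one (hn s a)
  have hNh : 0 < N + (h : ℝ) := by positivity
  have key : ∀ s', |Q s' - (n s a s' : ℝ) / N| ≤
      (m s' : ℝ) / (N + h) + (n s a s' : ℝ) * h / (N * (N + h)) := by
    intro s'
    rw [hQ' s']
    have heq : ((n s a s' : ℝ) + (m s' : ℝ)) / (N + h) - (n s a s' : ℝ) / N =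
        (m s' : ℝ) / (N + h) - (n s a s' : ℝ) * h / (N * (N + h)) := by
      field_simp
      ring
    rw [heq]
    have h1 : 0 ≤ (m s' : ℝ) / (N + h) := by positivity
    have h2 : 0 ≤ (n s a s' : ℝ) * h / (N * (N + h)) := by positivity
    calc |(m s' : ℝ) / (N + h) - (n s a s' : ℝ) * h / (N * (N + h))|
        ≤ |(m s' : ℝ) / (N + h)| + |(n s a s' : ℝ) * h / (N * (N + h))| :=
          abs_sub _ _
      _ = (m s' : ℝ) / (N + h) + (n s a s' : ℝ) * h / (N * (N + h)) := by
          rw [abs_of_nonneg h1, abs_of_nonneg h2]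
  calc ∑ s', |Q s' - (n s a s' : ℝ) / N|
      ≤ ∑ s', ((m s' : ℝ) / (N + h) + (n s a s' : ℝ) * h / (N * (N + h))) :=
        Finset.sum_le_sum fun s' _ => key s'
    _ = (h : ℝ) / (N + h) + N * h / (N * (N + h)) := by
        have hmR : (∑ s', (m s' : ℝ)) = h := by exact_mod_cast hm
        have hnR : (∑ s', (n s a s' : ℝ)) = N := by rw [hN]; push_cast; rfl
        rw [Finset.sum_add_distrib, ← Finset.sum_div, ← Finset.sum_div,
          ← Finset.sum_mul, hmR, hnR]
    _ = 2 * (h : ℝ) / (N + h) := by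
        field_simp
        ring
end
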